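/- arXiv:2103.06589 — 2 statements merged into one kernel-verified Lean document; each statement's English description precedes it below -/
import Mathlib

section
/- Let $V:[0,\infty)\to[0,\infty)$ be a continuously differentiable function satisfying $\dot V(t) \le -\eta_1 V(t)^{k_1} - \eta_2 V(t)^{k_2}$ for all $t\ge 0$, where $\eta_1,\eta_2>0$, $k_1>1$, $0<k_2<1$. Then $V(t)=0$ for all $t \ge T_{\max}$, where $T_{\max} = \frac{1}{\eta_1(k_1-1)} + \frac{1}{\eta_2(1-k_2)}$, independently of $V(0)$. -/
/-!
For `k ≠ 1` the substitution `W = V ^ (1 - k) / (1 - k)` turns `V' ≤ -η V ^ k` into `W' ≤ -η`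
wherever `V > 0`. With `k = k₁ > 1` (where `W < 0`) this forces `V` down to `1` within time
`1 / (η₁ (k₁ - 1))`, whatever `V 0` is. From then on, with `k = k₂ < 1`, `W` starts at most at
`1 / (1 - k₂)` and decreases at rate `η₂`, so it cannot stay positive for longer than
`1 / (η₂ (1 - k₂))`.
-/

open Set

section

variable {a b : ℝ} {V V' : ℝ → ℝ} {η k : ℝ}

lemma antitoneOn_Icc_of_hasDerivAt_nonpos {f f' : ℝ → ℝ}
    (hf : ∀ s ∈ Icc a b, HasDerivAt f (f' s) s) (hf' : ∀ s ∈ Icc a b, f' s ≤ 0) :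
    AntitoneOn f (Icc a b) := by
  refine antitoneOn_of_hasDerivWithinAt_nonpos (convex_Icc a b)
    (fun s hs => (hf s hs).continuousAt.continuousWithinAt) (fun s hs => ?_)
    (fun s hs => hf' s (interior_subset hs))
  exact (hf s (interior_subset hs)).hasDerivWithinAt

lemma hasDerivAt_rpow_one_sub_div {s : ℝ} (hk : k ≠ 1) (hV : HasDerivAt V (V' s) s)
    (hpos : 0 < V s) :
    HasDerivAt (fun u => V u ^ (1 - k) / (1 - k)) (V' s * V s ^ (-k)) s := by
  refine ((hV.rpow_const (p := 1 - k) (Or.inl hpos.ne')).div_const (1 - k)).congr_deriv ?_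
  rw [show 1 - k - 1 = -k by ring]
  field_simp [sub_ne_zero.mpr hk.symm]

lemma rpow_one_sub_div_le_of_deriv_le_neg_rpow (hk : k ≠ 1) (hab : a ≤ b)
    (hpos : ∀ s ∈ Icc a b, 0 < V s) (hV : ∀ s ∈ Icc a b, HasDerivAt V (V' s) s)
    (hV' : ∀ s ∈ Icc a b, V' s ≤ -η * V s ^ k) :
    V b ^ (1 - k) / (1 - k) ≤ V a ^ (1 - k) / (1 - k) - η * (b - a) := by
  have hanti : AntitoneOn (fun u => V u ^ (1 - k) / (1 - k) + η * u) (Icc a b) := by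
    refine antitoneOn_Icc_of_hasDerivAt_nonpos (fun s hs =>
      (hasDerivAt_rpow_one_sub_div hk (hV s hs) (hpos s hs)).add
        ((hasDerivAt_id s).const_mul η)) (fun s hs => ?_)
    have hcancel : V s ^ k * V s ^ (-k) = 1 := by
      rw [← Real.rpow_add (hpos s hs), add_neg_cancel, Real.rpow_zero]
    have := mul_le_mul_of_nonneg_right (hV' s hs) (Real.rpow_nonneg (hpos s hs).le (-k))
    rw [mul_assoc, hcancel] at this
    linarith
  have := hanti (left_mem_Icc.mpr hab) (right_mem_Icc.mpr hab) hab
  simp only at this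
  linarith

lemma exists_mem_Icc_le_one_of_deriv_le_neg_rpow (hη : 0 < η) (hk : 1 < k)
    (hV : ∀ s ∈ Icc a (a + 1 / (η * (k - 1))), HasDerivAt V (V' s) s)
    (hV' : ∀ s ∈ Icc a (a + 1 / (η * (k - 1))), V' s ≤ -η * V s ^ k) :
    ∃ s ∈ Icc a (a + 1 / (η * (k - 1))), V s ≤ 1 := by
  by_contra! hgt
  have hk' : 0 < k - 1 := sub_pos.mpr hk
  have hab : a ≤ a + 1 / (η * (k - 1)) := le_add_of_nonneg_right (by positivity)
  have hcmp := rpow_one_sub_div_le_of_deriv_le_neg_rpow hk.ne' hab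
    (fun s hs => one_pos.trans (hgt s hs)) hV hV'
  have hηT : η * (a + 1 / (η * (k - 1)) - a) = 1 / (k - 1) := by field_simp; ring
  have hneg : ∀ x : ℝ, x / (1 - k) = -(x / (k - 1)) := fun x => by
    rw [← neg_sub k 1, div_neg]
  have hend : V (a + 1 / (η * (k - 1))) ^ (1 - k) / (k - 1) < 1 / (k - 1) :=
    div_lt_div_of_pos_right (Real.rpow_lt_one_of_one_lt_of_neg
      (hgt _ (right_mem_Icc.mpr hab)) (by linarith)) hk'
  have hstart : 0 < V a ^ (1 - k) / (k - 1) :=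
    div_pos (Real.rpow_pos_of_pos (one_pos.trans (hgt a (left_mem_Icc.mpr hab))) _) hk'
  rw [hηT, hneg, hneg] at hcmp
  linarith

lemma eq_zero_of_deriv_le_neg_rpow (hη : 0 < η) (hk : k < 1) (hb : a + 1 / (η * (1 - k)) ≤ b)
    (hnn : ∀ s ∈ Icc a b, 0 ≤ V s) (hV : ∀ s ∈ Icc a b, HasDerivAt V (V' s) s)
    (hV' : ∀ s ∈ Icc a b, V' s ≤ -η * V s ^ k) (ha : V a ≤ 1) : V b = 0 := by
  have hk' : 0 < 1 - k := sub_pos.mpr hk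
  have hab : a ≤ b := le_trans (le_add_of_nonneg_right (by positivity)) hb
  have hanti : AntitoneOn V (Icc a b) := antitoneOn_Icc_of_hasDerivAt_nonpos hV fun s hs =>
    (hV' s hs).trans (by nlinarith [Real.rpow_nonneg (hnn s hs) k])
  by_contra hb0
  have hVb : 0 < V b := (hnn b (right_mem_Icc.mpr hab)).lt_of_ne' hb0
  have hcmp := rpow_one_sub_div_le_of_deriv_le_neg_rpow hk.ne hab
    (fun s hs => hVb.trans_le (hanti hs (right_mem_Icc.mpr hab) hs.2)) hV hV'
  have hstart : V a ^ (1 - k) / (1 - k) ≤ 1 / (1 - k) :=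
    div_le_div_of_nonneg_right (Real.rpow_le_one (hnn a (left_mem_Icc.mpr hab)) ha hk'.le) hk'.le
  have hdecay : 1 / (1 - k) ≤ η * (b - a) := by
    calc 1 / (1 - k) = η * (1 / (η * (1 - k))) := by field_simp
      _ ≤ η * (b - a) := by gcongr; linarith
  have hend : 0 < V b ^ (1 - k) / (1 - k) := div_pos (Real.rpow_pos_of_pos hVb _) hk'
  linarith

end

theorem stmt_0_general (V V' : ℝ → ℝ) (η1 η2 k1 k2 : ℝ)
    (hη1 : 0 < η1) (hη2 : 0 < η2) (hk1 : 1 < k1) (hk2' : k2 < 1)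
    (hVnn : ∀ t, 0 ≤ t → 0 ≤ V t)
    (hderiv : ∀ t, 0 ≤ t → HasDerivAt V (V' t) t)
    (hineq : ∀ t, 0 ≤ t → V' t ≤ -η1 * (V t) ^ k1 - η2 * (V t) ^ k2) :
    ∀ t, 1 / (η1 * (k1 - 1)) + 1 / (η2 * (1 - k2)) ≤ t → V t = 0 := by
  intro t ht
  have hineq1 : ∀ s, 0 ≤ s → V' s ≤ -η1 * V s ^ k1 := fun s hs => by
    linarith [hineq s hs, mul_nonneg hη2.le (Real.rpow_nonneg (hVnn s hs) k2)]
  have hineq2 : ∀ s, 0 ≤ s → V' s ≤ -η2 * V s ^ k2 := fun s hs => by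
    linarith [hineq s hs, mul_nonneg hη1.le (Real.rpow_nonneg (hVnn s hs) k1)]
  obtain ⟨t0, ⟨ht0, ht0T⟩, hVt0⟩ := exists_mem_Icc_le_one_of_deriv_le_neg_rpow (a := 0) hη1 hk1
    (fun s hs => hderiv s hs.1) (fun s hs => hineq1 s hs.1)
  exact eq_zero_of_deriv_le_neg_rpow hη2 hk2' (by linarith) (fun s hs => hVnn s (ht0.trans hs.1))
    (fun s hs => hderiv s (ht0.trans hs.1)) (fun s hs => hineq2 s (ht0.trans hs.1)) hVt0

theorem stmt_0 (V V' : ℝ → ℝ) (η1 η2 k1 k2 : ℝ)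
    (hη1 : 0 < η1) (hη2 : 0 < η2) (hk1 : 1 < k1) (hk2 : 0 < k2) (hk2' : k2 < 1)
    (hVnn : ∀ t, 0 ≤ t → 0 ≤ V t)
    (hderiv : ∀ t, 0 ≤ t → HasDerivAt V (V' t) t)
    (hineq : ∀ t, 0 ≤ t → V' t ≤ -η1 * (V t) ^ k1 - η2 * (V t) ^ k2) :
    ∀ t, 1 / (η1 * (k1 - 1)) + 1 / (η2 * (1 - k2)) ≤ t → V t = 0 :=
  stmt_0_general V V' η1 η2 k1 k2 hη1 hη2 hk1 hk2' hVnn hderiv hineq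
end

section
/- Let $V:[0,\infty)\to[0,\infty)$ be continuously differentiable and satisfy $\dot V(t) \le -(\eta_1 V(t)^{k_3} + \eta_2 V(t)^{k_4})^{k_5}$ for all $t\ge 0$, where $\eta_1,\eta_2,k_3,k_4,k_5>0$ with $k_3 k_5 > 1$ and $k_4 k_5 < 1$. Then $V(t)=0$ for all $t \ge T_{\max} := \frac{1}{\eta_1^{k_5}(k_3 k_5 - 1)} + \frac{1}{\eta_2^{k_5}(1 - k_4 k_5)}$, independently of $V(0)$. -/
open Set Real

lemma deriv_lb' (f f' : ℝ → ℝ) (a b K : ℝ) (hab : a ≤ b)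
    (hd : ∀ s ∈ Set.Icc a b, HasDerivAt f (f' s) s)
    (hK : ∀ s ∈ Set.Icc a b, K ≤ f' s) :
    K * (b - a) ≤ f b - f a := by
  have hmono : MonotoneOn (fun s => f s - K * s) (Set.Icc a b) := by
    apply monotoneOn_of_deriv_nonneg (convex_Icc a b)
    · exact fun s hs =>
        (((hd s hs).sub ((hasDerivAt_id s).const_mul K)).continuousAt).continuousWithinAt
    · intro s hs
      have hs' : s ∈ Set.Icc a b := interior_subset hs
      exact ((hd s hs').sub ((hasDerivAt_id s).const_mul K)).differentiableAt.differentiableWithinAt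
    · intro s hs
      have hs' : s ∈ Set.Icc a b := interior_subset hs
      have hg : HasDerivAt (fun s => f s - K * s) (f' s - K * 1) s :=
        (hd s hs').sub ((hasDerivAt_id s).const_mul K)
      rw [hg.deriv]
      have := hK s hs'
      linarith
  have := hmono (Set.left_mem_Icc.2 hab) (Set.right_mem_Icc.2 hab) hab
  simp only at this
  linarith

lemma deriv_ub' (f f' : ℝ → ℝ) (a b K : ℝ) (hab : a ≤ b)
    (hd : ∀ s ∈ Set.Icc a b, HasDerivAt f (f' s) s)
    (hK : ∀ s ∈ Set.Icc a b, f' s ≤ K) :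
    f b - f a ≤ K * (b - a) := by
  have := deriv_lb' (fun s => -f s) (fun s => -f' s) a b (-K) hab
    (fun s hs => (hd s hs).neg) (fun s hs => neg_le_neg (hK s hs))
  linarith

theorem stmt_1 (V V' : ℝ → ℝ) (η1 η2 k3 k4 k5 : ℝ)
    (hη1 : 0 < η1) (hη2 : 0 < η2) (hk3 : 0 < k3) (hk4 : 0 < k4) (hk5 : 0 < k5)
    (hk35 : 1 < k3 * k5) (hk45 : k4 * k5 < 1)
    (hVnn : ∀ t, 0 ≤ t → 0 ≤ V t)
    (hderiv : ∀ t, 0 ≤ t → HasDerivAt V (V' t) t)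
    (hineq : ∀ t, 0 ≤ t → V' t ≤ -(η1 * (V t) ^ k3 + η2 * (V t) ^ k4) ^ k5) :
    ∀ t, 1 / (η1 ^ k5 * (k3 * k5 - 1)) + 1 / (η2 ^ k5 * (1 - k4 * k5)) ≤ t → V t = 0 := by
  intro t ht
  have hη1k : 0 < η1 ^ k5 := Real.rpow_pos_of_pos hη1 k5
  have hη2k : 0 < η2 ^ k5 := Real.rpow_pos_of_pos hη2 k5
  set T1 : ℝ := 1 / (η1 ^ k5 * (k3 * k5 - 1)) with hT1def
  set T2 : ℝ := 1 / (η2 ^ k5 * (1 - k4 * k5)) with hT2def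
  have hT1pos : 0 < T1 := by
    apply div_pos one_pos (mul_pos hη1k (by linarith))
  have hT2pos : 0 < T2 := by
    apply div_pos one_pos (mul_pos hη2k (by linarith))
  have ht0 : 0 ≤ t := by linarith
  -- derivative is nonpositive
  have hV'le : ∀ u, 0 ≤ u → V' u ≤ 0 := by
    intro u hu
    have hVu := hVnn u hu
    have h0 : 0 ≤ (η1 * V u ^ k3 + η2 * V u ^ k4) ^ k5 :=
      Real.rpow_nonneg (add_nonneg (mul_nonneg hη1.le (Real.rpow_nonneg hVu k3))
        (mul_nonneg hη2.le (Real.rpow_nonneg hVu k4))) k5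
    have := hineq u hu
    linarith
  -- V t is a lower bound for V on [0,t]
  have hmonV : ∀ u, 0 ≤ u → u ≤ t → V t ≤ V u := by
    intro u hu hut
    have := deriv_ub' V V' u t 0 hut (fun s hs => hderiv s (hu.trans hs.1))
      (fun s hs => hV'le s (hu.trans hs.1))
    linarith
  by_contra hne
  have hpos : 0 < V t := lt_of_le_of_ne (hVnn t ht0) (Ne.symm hne)
  have hVpos : ∀ u, 0 ≤ u → u ≤ t → 0 < V u := fun u hu hut => hpos.trans_le (hmonV u hu hut)
  -- two comparison bounds on the derivative
  have hbound1 : ∀ u, 0 ≤ u → V' u ≤ -(η1 ^ k5 * V u ^ (k3 * k5)) := by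
    intro u hu
    have hVu := hVnn u hu
    have h1 : η1 * V u ^ k3 ≤ η1 * V u ^ k3 + η2 * V u ^ k4 :=
      le_add_of_nonneg_right (mul_nonneg hη2.le (Real.rpow_nonneg hVu k4))
    have h2 : (η1 * V u ^ k3) ^ k5 ≤ (η1 * V u ^ k3 + η2 * V u ^ k4) ^ k5 :=
      Real.rpow_le_rpow (mul_nonneg hη1.le (Real.rpow_nonneg hVu k3)) h1 hk5.le
    have h3 : (η1 * V u ^ k3) ^ k5 = η1 ^ k5 * V u ^ (k3 * k5) := by
      rw [Real.mul_rpow hη1.le (Real.rpow_nonneg hVu k3), ← Real.rpow_mul hVu]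
    have := hineq u hu
    linarith
  have hbound2 : ∀ u, 0 ≤ u → V' u ≤ -(η2 ^ k5 * V u ^ (k4 * k5)) := by
    intro u hu
    have hVu := hVnn u hu
    have h1 : η2 * V u ^ k4 ≤ η1 * V u ^ k3 + η2 * V u ^ k4 :=
      le_add_of_nonneg_left (mul_nonneg hη1.le (Real.rpow_nonneg hVu k3))
    have h2 : (η2 * V u ^ k4) ^ k5 ≤ (η1 * V u ^ k3 + η2 * V u ^ k4) ^ k5 :=
      Real.rpow_le_rpow (mul_nonneg hη2.le (Real.rpow_nonneg hVu k4)) h1 hk5.le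
    have h3 : (η2 * V u ^ k4) ^ k5 = η2 ^ k5 * V u ^ (k4 * k5) := by
      rw [Real.mul_rpow hη2.le (Real.rpow_nonneg hVu k4), ← Real.rpow_mul hVu]
    have := hineq u hu
    linarith
  -- Phase 1: V drops to 1 before time T1
  have hstep1 : ∃ s ∈ Set.Icc (0:ℝ) T1, V s ≤ 1 := by
    by_contra hcon
    push_neg at hcon
    have hW : ∀ s ∈ Set.Icc (0:ℝ) T1,
        HasDerivAt (fun x => V x ^ (1 - k3 * k5)) (V' s * (1 - k3 * k5) * V s ^ (1 - k3 * k5 - 1)) s := by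
      intro s hs
      exact (hderiv s hs.1).rpow_const (Or.inl (by have := hcon s hs; linarith))
    have hK : ∀ s ∈ Set.Icc (0:ℝ) T1,
        (k3 * k5 - 1) * η1 ^ k5 ≤ V' s * (1 - k3 * k5) * V s ^ (1 - k3 * k5 - 1) := by
      intro s hs
      have hVs1 : 1 < V s := hcon s hs
      have hVsp : 0 < V s := by linarith
      have hppow : 0 < V s ^ (1 - k3 * k5 - 1) := Real.rpow_pos_of_pos hVsp _
      have hm : (1 - k3 * k5) * V s ^ (1 - k3 * k5 - 1) ≤ 0 :=
        mul_nonpos_of_nonpos_of_nonneg (by linarith) hppow.le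
      have hb := hbound1 s hs.1
      have h5 : -(η1 ^ k5 * V s ^ (k3 * k5)) * ((1 - k3 * k5) * V s ^ (1 - k3 * k5 - 1))
          ≤ V' s * ((1 - k3 * k5) * V s ^ (1 - k3 * k5 - 1)) :=
        mul_le_mul_of_nonpos_right hb hm
      have hx : V s ^ (k3 * k5) * V s ^ (1 - k3 * k5 - 1) = 1 := by
        rw [← Real.rpow_add hVsp]
        norm_num
      have h6 : -(η1 ^ k5 * V s ^ (k3 * k5)) * ((1 - k3 * k5) * V s ^ (1 - k3 * k5 - 1))
          = (k3 * k5 - 1) * η1 ^ k5 := by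
        linear_combination ((k3 * k5 - 1) * η1 ^ k5) * hx
      calc (k3 * k5 - 1) * η1 ^ k5
          = -(η1 ^ k5 * V s ^ (k3 * k5)) * ((1 - k3 * k5) * V s ^ (1 - k3 * k5 - 1)) := h6.symm
        _ ≤ V' s * ((1 - k3 * k5) * V s ^ (1 - k3 * k5 - 1)) := h5
        _ = V' s * (1 - k3 * k5) * V s ^ (1 - k3 * k5 - 1) := by ring
    have hlb := deriv_lb' (fun x => V x ^ (1 - k3 * k5)) _ 0 T1 _ hT1pos.le hW hK
    have hKT : (k3 * k5 - 1) * η1 ^ k5 * (T1 - 0) = 1 := by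
      have hne1 : η1 ^ k5 * (k3 * k5 - 1) ≠ 0 := (mul_pos hη1k (by linarith)).ne'
      rw [hT1def, sub_zero, mul_one_div, mul_comm (k3 * k5 - 1), div_self hne1]
    have hW0pos : 0 < V 0 ^ (1 - k3 * k5) :=
      Real.rpow_pos_of_pos (by have := hcon 0 (Set.left_mem_Icc.2 hT1pos.le); linarith) _
    have hWT1lt : V T1 ^ (1 - k3 * k5) < 1 :=
      Real.rpow_lt_one_of_one_lt_of_neg (hcon T1 (Set.right_mem_Icc.2 hT1pos.le)) (by linarith)
    linarith
  obtain ⟨s, hs, hVs1⟩ := hstep1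
  -- Phase 2: from s, V reaches 0 before s + T2, contradiction with positivity
  have hsT2t : s + T2 ≤ t := by
    have := hs.2
    linarith
  have hmem : ∀ u, u ∈ Set.Icc s (s + T2) → (0 ≤ u ∧ u ≤ t) := by
    intro u hu
    constructor
    · linarith [hs.1, hu.1]
    · linarith [hu.2]
  have hW : ∀ u ∈ Set.Icc s (s + T2),
      HasDerivAt (fun x => V x ^ (1 - k4 * k5)) (V' u * (1 - k4 * k5) * V u ^ (1 - k4 * k5 - 1)) u := by
    intro u hu
    obtain ⟨hu0, hut⟩ := hmem u hu
    exact (hderiv u hu0).rpow_const (Or.inl (hVpos u hu0 hut).ne')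
  have hK : ∀ u ∈ Set.Icc s (s + T2),
      V' u * (1 - k4 * k5) * V u ^ (1 - k4 * k5 - 1) ≤ -((1 - k4 * k5) * η2 ^ k5) := by
    intro u hu
    obtain ⟨hu0, hut⟩ := hmem u hu
    have hVup : 0 < V u := hVpos u hu0 hut
    have hppow : 0 < V u ^ (1 - k4 * k5 - 1) := Real.rpow_pos_of_pos hVup _
    have hm : 0 ≤ (1 - k4 * k5) * V u ^ (1 - k4 * k5 - 1) :=
      mul_nonneg (by linarith) hppow.le
    have hb := hbound2 u hu0
    have h5 : V' u * ((1 - k4 * k5) * V u ^ (1 - k4 * k5 - 1))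
        ≤ -(η2 ^ k5 * V u ^ (k4 * k5)) * ((1 - k4 * k5) * V u ^ (1 - k4 * k5 - 1)) :=
      mul_le_mul_of_nonneg_right hb hm
    have hx : V u ^ (k4 * k5) * V u ^ (1 - k4 * k5 - 1) = 1 := by
      rw [← Real.rpow_add hVup]
      norm_num
    have h6 : -(η2 ^ k5 * V u ^ (k4 * k5)) * ((1 - k4 * k5) * V u ^ (1 - k4 * k5 - 1))
        = -((1 - k4 * k5) * η2 ^ k5) := by
      linear_combination (-(1 - k4 * k5) * η2 ^ k5) * hx
    calc V' u * (1 - k4 * k5) * V u ^ (1 - k4 * k5 - 1)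
        = V' u * ((1 - k4 * k5) * V u ^ (1 - k4 * k5 - 1)) := by ring
      _ ≤ -(η2 ^ k5 * V u ^ (k4 * k5)) * ((1 - k4 * k5) * V u ^ (1 - k4 * k5 - 1)) := h5
      _ = -((1 - k4 * k5) * η2 ^ k5) := h6
  have hub := deriv_ub' (fun x => V x ^ (1 - k4 * k5)) _ s (s + T2) _
    (by linarith) hW hK
  have hKT : -((1 - k4 * k5) * η2 ^ k5) * (s + T2 - s) = -1 := by
    have hne2 : η2 ^ k5 * (1 - k4 * k5) ≠ 0 := (mul_pos hη2k (by linarith)).ne'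
    have h7 : (1 - k4 * k5) * η2 ^ k5 * T2 = 1 := by
      rw [hT2def, mul_one_div, mul_comm (1 - k4 * k5), div_self hne2]
    have h8 : s + T2 - s = T2 := by ring
    rw [h8]
    linarith
  have hWs : V s ^ (1 - k4 * k5) ≤ 1 :=
    Real.rpow_le_one (hVnn s hs.1) hVs1 (by linarith)
  have hWend : 0 < V (s + T2) ^ (1 - k4 * k5) :=
    Real.rpow_pos_of_pos (hVpos (s + T2) (by linarith [hs.1]) hsT2t) _
  linarith
end
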